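/- (Lower-bound half of Theorem 1.) Let μ, x̂, R, c, g and the non-accumulation assumption be as described, let p* = μ{ w ∈ ℝⁿ : x̂ + w ∈ R }, fix β ∈ (0,1) and N ≥ 1, and on ((ℝⁿ)^N, μ^N) let K = |{ i : x̂ + w_i ∉ R }|. Then μ^N { (w₁, …, w_N) : p̲(K) ≤ p* } ≥ 1 − β/2. -/

import Mathlib

open MeasureTheory
open scoped ENNReal

/-- `F_{N,k}(p) = Σ_{i=0}^{k} C(N,i) (1−p)^i p^{N−i}`. -/
def binomCDF (N k : ℕ) (p : ℝ) : ℝ :=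
  ∑ i ∈ Finset.range (k + 1), (N.choose i : ℝ) * (1 - p) ^ i * p ^ (N - i)

private def pacGfun (N : ℕ) (p : ℝ) : ℕ → ℝ
  | 0 => 0
  | (i+1) => (N.choose i : ℝ) * ((N - i : ℕ) : ℝ) * (1 - p) ^ i * p ^ (N - i - 1)

private lemma binomCDF_hasDerivAt (N k : ℕ) (hk : k ≤ N) (p : ℝ) :
    HasDerivAt (binomCDF N k)
      ((N.choose k : ℝ) * ((N - k : ℕ) : ℝ) * (1 - p) ^ k * p ^ (N - k - 1)) p := by
  have key : ∀ i ∈ Finset.range (k + 1),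
      HasDerivAt (fun q : ℝ => (N.choose i : ℝ) * (1 - q) ^ i * q ^ (N - i))
        (pacGfun N p (i + 1) - pacGfun N p i) p := by
    intro i hi
    have hiN : i ≤ N := le_trans (Nat.lt_succ_iff.mp (Finset.mem_range.mp hi)) hk
    have h1 : HasDerivAt (fun q : ℝ => (1 - q) ^ i) ((i : ℝ) * (1 - p) ^ (i - 1) * (-1)) p :=
      ((hasDerivAt_id p).const_sub 1).pow i
    have h3 := (h1.const_mul (N.choose i : ℝ)).fun_mul (hasDerivAt_pow (N - i) p)
    refine h3.congr_deriv ?_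
    match i with
    | 0 => simp [pacGfun]
    | (j + 1) =>
      have hch : ((N.choose (j+1) : ℝ)) * ((j:ℝ)+1) = (N.choose j : ℝ) * ((N - j : ℕ) : ℝ) := by
        have := Nat.choose_succ_right_eq N j
        exact_mod_cast congrArg (fun t : ℕ => (t : ℝ)) this
      have e1 : N - (j + 1) = N - j - 1 := by omega
      have e2 : N - (j + 1) - 1 = N - j - 1 - 1 := by omega
      simp only [pacGfun, e1, e2, Nat.add_sub_cancel]
      rw [← hch]
      push_cast
      ring
  have hsum := HasDerivAt.fun_sum key
  rw [Finset.sum_range_sub (pacGfun N p) (k+1)] at hsum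
  simp [pacGfun] at hsum; exact hsum

private lemma binomCDF_mono (N k : ℕ) (hk : k ≤ N) {p q : ℝ}
    (hp0 : 0 ≤ p) (hpq : p ≤ q) (hq1 : q ≤ 1) :
    binomCDF N k p ≤ binomCDF N k q := by
  have h : MonotoneOn (binomCDF N k) (Set.Icc 0 1) := by
    apply monotoneOn_of_deriv_nonneg (convex_Icc 0 1)
    · exact fun x _ => ((binomCDF_hasDerivAt N k hk x).continuousAt).continuousWithinAt
    · intro x hx
      exact (binomCDF_hasDerivAt N k hk x).differentiableAt.differentiableWithinAt
    · intro x hx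
      rw [interior_Icc] at hx
      rw [(binomCDF_hasDerivAt N k hk x).deriv]
      have h1 : (0:ℝ) ≤ 1 - x := by linarith [hx.2]
      have h2 : (0:ℝ) ≤ x := le_of_lt hx.1
      exact mul_nonneg (mul_nonneg (mul_nonneg (Nat.cast_nonneg _) (Nat.cast_nonneg _))
        (pow_nonneg h1 _)) (pow_nonneg h2 _)
  exact h ⟨hp0, le_trans hpq hq1⟩ ⟨le_trans hp0 hpq, hq1⟩ hpq

open scoped Classical in
private lemma pi_card_filter_eq' {α : Type*} [MeasurableSpace α] (μ : Measure α)
    [IsProbabilityMeasure μ] (N : ℕ) (B : Set α) (hB : MeasurableSet B) (k : ℕ) :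
    Measure.pi (fun _ : Fin N => μ)
        {w : Fin N → α | (Finset.univ.filter fun i => w i ∈ B).card = k}
      = (N.choose k : ℝ≥0∞) * (μ B) ^ k * (μ Bᶜ) ^ (N - k) := by
  have hset : {w : Fin N → α | (Finset.univ.filter fun i => w i ∈ B).card = k}
      = ⋃ S ∈ Finset.powersetCard k (Finset.univ : Finset (Fin N)),
          Set.univ.pi (fun i => if i ∈ S then B else Bᶜ) := by
    ext w
    simp only [Set.mem_setOf_eq, Set.mem_iUnion, Finset.mem_powersetCard, Set.mem_pi,
      Set.mem_univ, true_imp_iff]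
    constructor
    · intro h
      refine ⟨Finset.univ.filter fun i => w i ∈ B, ⟨Finset.subset_univ _, h⟩, ?_⟩
      intro i
      by_cases hi : w i ∈ B <;> simp [hi]
    · rintro ⟨S, ⟨-, hcard⟩, hS⟩
      have : Finset.univ.filter (fun i => w i ∈ B) = S := by
        ext i
        have := hS i
        by_cases hi : i ∈ S <;> simp_all
      rw [this, hcard]
  rw [hset]
  rw [measure_biUnion_finset]
  · have hval : ∀ S ∈ Finset.powersetCard k (Finset.univ : Finset (Fin N)),
        Measure.pi (fun _ : Fin N => μ) (Set.univ.pi (fun i => if i ∈ S then B else Bᶜ))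
          = (μ B) ^ k * (μ Bᶜ) ^ (N - k) := by
      intro S hS
      rw [Finset.mem_powersetCard] at hS
      rw [Measure.pi_pi]
      rw [← Finset.prod_filter_mul_prod_filter_not Finset.univ (· ∈ S)]
      have e1 : Finset.univ.filter (· ∈ S) = S := by ext i; simp
      have e2 : ∀ i ∈ S, μ (if i ∈ S then B else Bᶜ) = μ B := by intro i hi; simp [hi]
      have e3 : ∀ i ∈ Finset.univ.filter (¬ · ∈ S), μ (if i ∈ S then B else Bᶜ) = μ Bᶜ := by
        intro i hi; simp only [Finset.mem_filter] at hi; simp [hi.2]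
      rw [e1] at *
      rw [Finset.prod_congr rfl e2, Finset.prod_congr rfl e3, Finset.prod_const,
        Finset.prod_const, hS.2]
      congr 2
      rw [Finset.filter_not, Finset.card_sdiff_of_subset (by simp [e1])]
      simp [e1, hS.2]
    rw [Finset.sum_congr rfl hval, Finset.sum_const, Finset.card_powersetCard,
      Finset.card_univ, Fintype.card_fin, nsmul_eq_mul, mul_assoc]
  · intro S hS T hT hST
    simp only [Function.onFun, Set.disjoint_left]
    intro w hwS hwT
    apply hST
    have hm : ∀ (U : Finset (Fin N)), w ∈ Set.univ.pi (fun i => if i ∈ U then B else Bᶜ) →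
        Finset.univ.filter (fun i => w i ∈ B) = U := by
      intro U hU
      ext i
      have := hU i (Set.mem_univ i)
      by_cases hi : i ∈ U <;> simp_all
    rw [← hm S hwS, ← hm T hwT]
  · intro S hS
    exact MeasurableSet.univ_pi fun i => by by_cases hi : i ∈ S <;> simp [hi, hB, hB.compl]

private lemma pi_card_filter_eq {α : Type*} [MeasurableSpace α] (μ : Measure α)
    [IsProbabilityMeasure μ] (N : ℕ) (B : Set α) (hB : MeasurableSet B) (k : ℕ)
    (D : ∀ (w : Fin N → α), DecidablePred fun i : Fin N => w i ∈ B) :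
    Measure.pi (fun _ : Fin N => μ)
        {w : Fin N → α | (@Finset.filter _ (fun i => w i ∈ B) (D w) Finset.univ).card = k}
      = (N.choose k : ℝ≥0∞) * (μ B) ^ k * (μ Bᶜ) ^ (N - k) := by
  have h := pi_card_filter_eq' μ N B hB k
  have hs : {w : Fin N → α | (@Finset.filter _ (fun i => w i ∈ B) (D w) Finset.univ).card = k}
      = {w : Fin N → α | (@Finset.filter _ (fun i => w i ∈ B)
          (fun a => Classical.propDecidable _) Finset.univ).card = k} := by
    ext w
    simp only [Set.mem_setOf_eq]
    rw [@Finset.filter_congr _ (fun i => w i ∈ B) (fun i => w i ∈ B) (D w)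
      (fun a => Classical.propDecidable _) Finset.univ (fun _ _ => Iff.rfl)]
  rw [hs]
  exact h

open scoped Classical in
/-- **lower-bound half of Theorem 1.**
With `p* = μ{w : x̂ + w ∈ R}`, `K` the random number of samples whose successor
lies outside `R`, and `p̲` characterized by `p̲(N) = 0` and
`F_{N,K}(p̲(K)) = β/(2N)` for `K < N`, we have
`μ^N { p̲(K) ≤ p* } ≥ 1 − β/2`. -/
theorem pac_probability_interval_lower {n m : ℕ} (hn : 1 ≤ n) (hm : 1 ≤ m)
    (M : Matrix (Fin m) (Fin n) ℝ) (b : Fin m → ℝ) (c : Fin n → ℝ)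
    (hc : ∀ j, M.mulVec c j < b j)
    (μ : Measure (Fin n → ℝ)) [IsProbabilityMeasure μ]
    (xhat : Fin n → ℝ)
    (hacc : ∀ lam : ℝ,
      μ {w : Fin n → ℝ | (Finset.univ.sup' ⟨⟨0, hm⟩, Finset.mem_univ _⟩
          fun j => M.mulVec (xhat + w - c) j / (b j - M.mulVec c j)) = lam} = 0)
    (β : ℝ) (hβ : β ∈ Set.Ioo (0 : ℝ) 1) (N : ℕ) (hN : 1 ≤ N)
    (plow : ℕ → ℝ)
    (hplowN : plow N = 0)
    (hplow : ∀ K < N, plow K ∈ Set.Ioo (0 : ℝ) 1 ∧ binomCDF N K (plow K) = β / (2 * N)) :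
    ENNReal.ofReal (1 - β / 2) ≤
      Measure.pi (fun _ : Fin N => μ)
        {w : Fin N → (Fin n → ℝ) |
          plow ((Finset.univ.filter fun i : Fin N =>
              ¬ ∀ j, M.mulVec (xhat + w i) j ≤ b j).card)
            ≤ (μ {w' : Fin n → ℝ | ∀ j, M.mulVec (xhat + w') j ≤ b j}).toReal} := by
  obtain ⟨hβ0, hβ1⟩ := hβ
  set A : Set (Fin n → ℝ) := {w' : Fin n → ℝ | ∀ j, M.mulVec (xhat + w') j ≤ b j} with hA
  -- measurability of A
  have hAm : MeasurableSet A := by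
    have h : A = ⋂ j, {w' : Fin n → ℝ | M.mulVec (xhat + w') j ≤ b j} := by ext; simp [hA]
    rw [h]
    refine MeasurableSet.iInter fun j => ?_
    have hmeas : Measurable fun w' : Fin n → ℝ => M.mulVec (xhat + w') j := by
      have e : (fun w' : Fin n → ℝ => M.mulVec (xhat + w') j)
          = fun w' => ∑ l, M j l * (xhat l + w' l) := by
        funext w'
        simp [Matrix.mulVec, dotProduct, Finset.sum_add_distrib, mul_add]
      rw [e]
      exact Finset.measurable_sum _ fun l _ =>
        (measurable_const.add (measurable_pi_apply l)).const_mul _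
    exact measurableSet_le hmeas measurable_const
  set ν : Measure (Fin N → Fin n → ℝ) := Measure.pi (fun _ : Fin N => μ) with hν
  haveI : IsProbabilityMeasure ν := by rw [hν]; infer_instance
  set pstar : ℝ := (μ A).toReal with hps
  have hp0 : 0 ≤ pstar := ENNReal.toReal_nonneg
  have hp1 : pstar ≤ 1 := by
    rw [hps]
    exact ENNReal.toReal_le_of_le_ofReal zero_le_one (by simp [prob_le_one])
  -- the count function
  set K : (Fin N → Fin n → ℝ) → ℕ := fun w =>
    (Finset.univ.filter fun i : Fin N => ¬ ∀ j, M.mulVec (xhat + w i) j ≤ b j).card with hKdef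
  have hfilt : ∀ w : Fin N → Fin n → ℝ,
      (Finset.univ.filter fun i : Fin N => ¬ ∀ j, M.mulVec (xhat + w i) j ≤ b j)
        = (Finset.univ.filter fun i : Fin N => w i ∈ Aᶜ) := by
    intro w
    apply Finset.filter_congr
    intro i _
    simp [hA]
  have hKle : ∀ w, K w ≤ N := by
    intro w
    calc K w ≤ (Finset.univ : Finset (Fin N)).card := Finset.card_filter_le _ _
    _ = N := by simp
  -- measures of compl
  have hAc : μ Aᶜ = ENNReal.ofReal (1 - pstar) := by
    rw [prob_compl_eq_one_sub hAm, hps,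
      ← ENNReal.ofReal_toReal (a := μ A) (measure_ne_top μ A),
      ← ENNReal.ofReal_one, ← ENNReal.ofReal_sub _ ENNReal.toReal_nonneg]
    simp
  have hAo : μ A = ENNReal.ofReal pstar := by
    rw [hps, ENNReal.ofReal_toReal (measure_ne_top μ A)]
  -- measure of the event {K = k}
  have hEk : ∀ k : ℕ, ν {w | K w = k}
      = ENNReal.ofReal ((N.choose k : ℝ) * (1 - pstar) ^ k * pstar ^ (N - k)) := by
    intro k
    have hsetEq : {w : Fin N → Fin n → ℝ | K w = k}
        = {w : Fin N → Fin n → ℝ | (Finset.univ.filter fun i => w i ∈ Aᶜ).card = k} := by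
      ext w
      simp only [Set.mem_setOf_eq, hKdef, hfilt w]
    rw [hsetEq, hν, pi_card_filter_eq μ N Aᶜ hAm.compl k _, compl_compl, hAc, hAo]
    have h1m : (0:ℝ) ≤ 1 - pstar := by linarith
    rw [← ENNReal.ofReal_pow h1m, ← ENNReal.ofReal_pow hp0,
      ← ENNReal.ofReal_natCast (N.choose k),
      ← ENNReal.ofReal_mul (Nat.cast_nonneg _),
      ← ENNReal.ofReal_mul (mul_nonneg (Nat.cast_nonneg _) (pow_nonneg h1m _))]
  -- the bad set of counts
  set Sbad : Finset ℕ := (Finset.range N).filter (fun k => pstar < plow k) with hSbad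
  -- pointwise bound for k in Sbad
  have hterm : ∀ k ∈ Sbad,
      (N.choose k : ℝ) * (1 - pstar) ^ k * pstar ^ (N - k) ≤ β / (2 * N) := by
    intro k hk
    rw [hSbad, Finset.mem_filter, Finset.mem_range] at hk
    obtain ⟨hkN, hkp⟩ := hk
    obtain ⟨⟨hl0, hl1⟩, hF⟩ := hplow k hkN
    have h1 : (N.choose k : ℝ) * (1 - pstar) ^ k * pstar ^ (N - k) ≤ binomCDF N k pstar := by
      unfold binomCDF
      refine Finset.single_le_sum (f := fun i => (N.choose i : ℝ) * (1 - pstar) ^ i * pstar ^ (N - i))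
        (fun i _ => ?_) (Finset.self_mem_range_succ k)
      have : (0:ℝ) ≤ 1 - pstar := by linarith
      positivity
    have h2 : binomCDF N k pstar ≤ binomCDF N k (plow k) :=
      binomCDF_mono N k (le_of_lt hkN) hp0 (le_of_lt hkp) (le_of_lt hl1)
    linarith [h1, h2, hF.le, hF.ge]
  -- bound on the bad event
  have hBad : ν {w | ¬ plow (K w) ≤ pstar} ≤ ENNReal.ofReal (β / 2) := by
    have hsub : {w : Fin N → Fin n → ℝ | ¬ plow (K w) ≤ pstar}
        ⊆ ⋃ k ∈ Sbad, {w | K w = k} := by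
      intro w hw
      simp only [Set.mem_setOf_eq, not_le] at hw
      have hKN : K w ≠ N := by
        intro h
        rw [h, hplowN] at hw
        exact absurd hw (not_lt.mpr hp0)
      have hKlt : K w < N := lt_of_le_of_ne (hKle w) hKN
      have hmem : K w ∈ Sbad := by
        rw [hSbad, Finset.mem_filter, Finset.mem_range]
        exact ⟨hKlt, hw⟩
      exact Set.mem_iUnion₂.mpr ⟨K w, hmem, rfl⟩
    calc ν {w | ¬ plow (K w) ≤ pstar} ≤ ν (⋃ k ∈ Sbad, {w | K w = k}) := measure_mono hsub
      _ ≤ ∑ k ∈ Sbad, ν {w | K w = k} := measure_biUnion_finset_le _ _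
      _ ≤ ∑ k ∈ Sbad, ENNReal.ofReal (β / (2 * N)) := by
          refine Finset.sum_le_sum fun k hk => ?_
          rw [hEk k]
          exact ENNReal.ofReal_le_ofReal (hterm k hk)
      _ = Sbad.card • ENNReal.ofReal (β / (2 * N)) := by rw [Finset.sum_const]
      _ ≤ N • ENNReal.ofReal (β / (2 * N)) := by
          rw [nsmul_eq_mul, nsmul_eq_mul]
          refine mul_le_mul_left ?_ _
          exact_mod_cast (Finset.card_filter_le _ _).trans (Finset.card_range N).le
      _ = ENNReal.ofReal (β / 2) := by
          rw [nsmul_eq_mul, ← ENNReal.ofReal_natCast N,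
            ← ENNReal.ofReal_mul (Nat.cast_nonneg N)]
          congr 1
          have hNpos : (0:ℝ) < N := by exact_mod_cast hN
          field_simp
  -- conclude
  have hone : (1 : ℝ≥0∞) ≤ ν {w | plow (K w) ≤ pstar} + ν {w | ¬ plow (K w) ≤ pstar} := by
    have huniv : (Set.univ : Set (Fin N → Fin n → ℝ))
        = {w | plow (K w) ≤ pstar} ∪ {w | ¬ plow (K w) ≤ pstar} := by
      ext w
      by_cases h : plow (K w) ≤ pstar
      · simp [h]
      · simp [h, lt_of_not_ge h]
    calc (1:ℝ≥0∞) = ν Set.univ := (measure_univ (μ := ν)).symm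
      _ ≤ _ := by rw [huniv]; exact measure_union_le _ _
  have hfinal : ENNReal.ofReal (1 - β / 2) ≤ ν {w | plow (K w) ≤ pstar} := by
    rw [ENNReal.ofReal_sub _ (by linarith), ENNReal.ofReal_one]
    rw [tsub_le_iff_right]
    calc (1:ℝ≥0∞) ≤ ν {w | plow (K w) ≤ pstar} + ν {w | ¬ plow (K w) ≤ pstar} := hone
      _ ≤ ν {w | plow (K w) ≤ pstar} + ENNReal.ofReal (β / 2) := add_le_add_right hBad _
  exact hfinal
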